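/- Let S be a semigroup that is a finite disjoint union of free monogenic subsemigroups N_a = ⟨a⟩ (a ∈ A). If a, b ∈ A, x ∈ S, and a^p * x = b^r and a^(p+q) * x = b^s for positive integers p, q, r, s, then r ≤ s. -/
import Mathlib


/-- `spow a n` is the `n`-th power of `a` in a semigroup, for `n ≥ 1`
(with the junk value `a` at `n = 0`). -/
def spow {S : Type*} [Semigroup S] (a : S) : ℕ → S
  | 0 => a
  | 1 => a
  | (n + 2) => spow a (n + 1) * a

/-- The subsemigroup (as a set) generated by `a`: all positive powers of `a`. -/
def Nblock {S : Type*} [Semigroup S] (a : S) : Set S :=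
  {x | ∃ i : ℕ, 1 ≤ i ∧ x = spow a i}

section spow_lemmas

variable {S : Type*} [Semigroup S]

lemma spow_succ' (a : S) {n : ℕ} (hn : 1 ≤ n) : spow a (n + 1) = spow a n * a := by
  cases n with
  | zero => omega
  | succ m => rfl

lemma spow_add' (a : S) {m n : ℕ} (hm : 1 ≤ m) (hn : 1 ≤ n) :
    spow a (m + n) = spow a m * spow a n := by
  induction n with
  | zero => omega
  | succ k ih =>
    rcases Nat.eq_zero_or_pos k with hk | hk
    · subst hk
      rw [spow_succ' a hm]
      rfl
    · rw [show m + (k + 1) = (m + k) + 1 by omega, spow_succ' a (by omega), ih hk,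
        mul_assoc, ← spow_succ' a hk]

lemma spow_spow' (a : S) {m n : ℕ} (hm : 1 ≤ m) (hn : 1 ≤ n) :
    spow (spow a m) n = spow a (m * n) := by
  induction n with
  | zero => omega
  | succ k ih =>
    rcases Nat.eq_zero_or_pos k with hk | hk
    · subst hk
      rw [Nat.mul_one]
      rfl
    · rw [spow_succ' _ hk, ih hk, ← spow_add' a (Nat.mul_pos (by omega) hk) hm,
        show m * k + m = m * (k + 1) by ring]

end spow_lemmas

theorem stmt2 {S : Type*} [Semigroup S] {A : Type*} [Finite A] (gen : A → S)
    (hcover : ∀ x : S, ∃ a : A, x ∈ Nblock (gen a))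
    (hfree : ∀ (a b : A) (i j : ℕ), 1 ≤ i → 1 ≤ j →
      spow (gen a) i = spow (gen b) j → a = b ∧ i = j)
    (a b : A) (x : S) (p q r s : ℕ) (hp : 1 ≤ p) (hq : 1 ≤ q) (hr : 1 ≤ r) (hs : 1 ≤ s)
    (h1 : spow (gen a) p * x = spow (gen b) r)
    (h2 : spow (gen a) (p + q) * x = spow (gen b) s) :
    r ≤ s := by
  by_contra hcon
  push_neg at hcon
  -- hcon : s < r
  have hβ1 : 1 ≤ r - 1 := by omega
  have hβs : s ≤ r - 1 := by omega
  have hδ1 : 1 ≤ r - s := by omega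
  -- Key relation: a^q * b^r = b^s
  have hK0 : spow (gen a) q * spow (gen b) r = spow (gen b) s := by
    have hpq : spow (gen a) (p + q) = spow (gen a) q * spow (gen a) p := by
      rw [Nat.add_comm p q]
      exact spow_add' (gen a) hq hp
    calc spow (gen a) q * spow (gen b) r
        = spow (gen a) q * (spow (gen a) p * x) := by rw [h1]
      _ = spow (gen a) q * spow (gen a) p * x := by rw [mul_assoc]
      _ = spow (gen a) (p + q) * x := by rw [hpq]
      _ = spow (gen b) s := h2
  have hK : ∀ τ : ℕ, spow (gen a) q * spow (gen b) (r + τ) = spow (gen b) (s + τ) := by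
    intro τ
    rcases Nat.eq_zero_or_pos τ with h | h
    · subst h
      simpa using hK0
    · rw [spow_add' (gen b) hr h, ← mul_assoc, hK0, ← spow_add' (gen b) hs h]
  have hK' : ∀ m : ℕ, s ≤ m →
      spow (gen a) q * spow (gen b) (m + (r - s)) = spow (gen b) m := by
    intro m hm
    have h := hK (m - s)
    rw [show r + (m - s) = m + (r - s) by omega, show s + (m - s) = m by omega] at h
    exact h
  -- iterated version
  have hL2 : ∀ k : ℕ, 1 ≤ k → ∀ m : ℕ, s ≤ m →
      spow (gen a) (k * q) * spow (gen b) (m + k * (r - s)) = spow (gen b) m := by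
    intro k hk
    induction k, hk using Nat.le_induction with
    | base =>
      intro m hm
      rw [one_mul, one_mul]
      exact hK' m hm
    | succ n hn ih =>
      intro m hm
      have hnq : 1 ≤ n * q := Nat.mul_pos hn hq
      rw [show (n + 1) * q = n * q + q by ring, spow_add' (gen a) hnq hq, mul_assoc]
      have hinner : spow (gen a) q * spow (gen b) (m + (n + 1) * (r - s))
          = spow (gen b) (m + n * (r - s)) := by
        have h := hK' (m + n * (r - s)) (by omega)
        rw [show m + n * (r - s) + (r - s) = m + (n + 1) * (r - s) by ring] at h
        exact h
      rw [hinner]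
      exact ih m hm
  -- the element w1 := a^q * b^(r-1) shifts b-powers by s-1
  have hw1L : ∀ m : ℕ, 1 ≤ m →
      (spow (gen a) q * spow (gen b) (r - 1)) * spow (gen b) m
        = spow (gen b) (m + (s - 1)) := by
    intro m hm
    rw [mul_assoc, ← spow_add' (gen b) hβ1 hm]
    have h := hK (m - 1)
    rw [show r + (m - 1) = r - 1 + m by omega, show s + (m - 1) = m + (s - 1) by omega] at h
    exact h
  obtain ⟨c1, hc1⟩ := hcover (spow (gen a) q * spow (gen b) (r - 1))
  obtain ⟨ε, hε1, hw1⟩ := hc1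
  -- hw1 : a^q * b^(r-1) = spow (gen c1) ε
  have hL4 : ∀ j : ℕ, 1 ≤ j → ∀ m : ℕ, 1 ≤ m →
      spow (gen c1) (j * ε) * spow (gen b) m = spow (gen b) (m + j * (s - 1)) := by
    intro j hj
    induction j, hj using Nat.le_induction with
    | base =>
      intro m hm
      rw [one_mul, one_mul, ← hw1]
      exact hw1L m hm
    | succ n hn ih =>
      intro m hm
      have hnε : 1 ≤ n * ε := Nat.mul_pos hn hε1
      rw [show (n + 1) * ε = n * ε + ε by ring, spow_add' (gen c1) hnε hε1, mul_assoc,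
        ← hw1, hw1L m hm, ih (m + (s - 1)) (by omega)]
      congr 1
      ring
  -- construct W (a two-sided absorber of high b-powers on the left) with a b-suffix form
  have hWex : ∃ W : S, (∀ m : ℕ, s ≤ m → W * spow (gen b) m = spow (gen b) m) ∧
      ∃ G : S, G * spow (gen b) (r - 1) = W := by
    rcases Nat.eq_zero_or_pos (s - 1) with hσ | hσ
    · refine ⟨spow (gen c1) ((r - s) * ε), ?_, ?_⟩
      · intro m hm
        rw [hL4 (r - s) hδ1 m (by omega), hσ, Nat.mul_zero, Nat.add_zero]
      · rcases Nat.eq_or_lt_of_le hδ1 with hδe | hδ2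
        · refine ⟨spow (gen a) q, ?_⟩
          rw [hw1, ← hδe, one_mul]
        · have hδm1 : 1 ≤ r - s - 1 := by omega
          have h1' : 1 ≤ (r - s - 1) * ε := Nat.mul_pos hδm1 hε1
          refine ⟨spow (gen c1) ((r - s - 1) * ε) * spow (gen a) q, ?_⟩
          rw [mul_assoc, hw1, ← spow_add' (gen c1) h1' hε1,
            show (r - s - 1) * ε + ε = (r - s) * ε by
              conv_rhs => rw [show r - s = (r - s - 1) + 1 by omega]
              rw [Nat.add_mul, one_mul]]
    · have hσq : 1 ≤ (s - 1) * q := Nat.mul_pos hσ hq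
      refine ⟨spow (gen a) ((s - 1) * q) * spow (gen c1) ((r - s) * ε), ?_, ?_⟩
      · intro m hm
        rw [mul_assoc, hL4 (r - s) hδ1 m (by omega)]
        have h := hL2 (s - 1) hσ m hm
        rw [show m + (s - 1) * (r - s) = m + (r - s) * (s - 1) by ring] at h
        exact h
      · rcases Nat.eq_or_lt_of_le hδ1 with hδe | hδ2
        · refine ⟨spow (gen a) ((s - 1) * q + q), ?_⟩
          rw [spow_add' (gen a) hσq hq, mul_assoc, hw1, ← hδe, one_mul]
        · have hδm1 : 1 ≤ r - s - 1 := by omega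
          have h1' : 1 ≤ (r - s - 1) * ε := Nat.mul_pos hδm1 hε1
          refine ⟨spow (gen a) ((s - 1) * q) *
            (spow (gen c1) ((r - s - 1) * ε) * spow (gen a) q), ?_⟩
          rw [mul_assoc, mul_assoc, hw1, ← spow_add' (gen c1) h1' hε1,
            show (r - s - 1) * ε + ε = (r - s) * ε by
              conv_rhs => rw [show r - s = (r - s - 1) + 1 by omega]
              rw [Nat.add_mul, one_mul]]
  obtain ⟨W, hW, G, hG⟩ := hWex
  have hL6 : ∀ j : ℕ, 1 ≤ j → ∀ m : ℕ, s ≤ m →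
      spow W j * spow (gen b) m = spow (gen b) m := by
    intro j hj
    induction j, hj using Nat.le_induction with
    | base =>
      intro m hm
      exact hW m hm
    | succ n hn ih =>
      intro m hm
      rw [spow_succ' W hn, mul_assoc, hW m hm]
      exact ih m hm
  -- the V family
  have hL8 : ∀ j l : ℕ,
      (spow (gen b) (r - 1) * spow W (j + 1)) * (spow (gen b) (r - 1) * spow W (l + 1))
        = spow (gen b) (r - 1) * (spow (gen b) (r - 1) * spow W (l + 1)) := by
    intro j l
    rw [mul_assoc, ← mul_assoc (spow W (j + 1)), hL6 (j + 1) (by omega) (r - 1) hβs]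
  have hVC : ∀ j : ℕ, ∃ c : A, ∃ i : ℕ, 1 ≤ i ∧
      spow (gen b) (r - 1) * spow W (j + 1) = spow (gen c) i := by
    intro j
    obtain ⟨c, hc⟩ := hcover (spow (gen b) (r - 1) * spow W (j + 1))
    obtain ⟨i, hi, hx⟩ := hc
    exact ⟨c, i, hi, hx⟩
  choose blk eexp he1 hVe using hVC
  obtain ⟨j, l, hjl, hbl⟩ := Finite.exists_ne_map_eq_of_infinite blk
  have hejl : eexp j = eexp l := by
    have h8 := (hL8 j l).trans (hL8 l l).symm
    rw [hVe j, hVe l, hbl] at h8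
    rw [← spow_add' (gen (blk l)) (he1 j) (he1 l),
      ← spow_add' (gen (blk l)) (he1 l) (he1 l)] at h8
    have h9 := (hfree (blk l) (blk l) (eexp j + eexp l) (eexp l + eexp l)
      (le_trans (he1 j) (Nat.le_add_right _ _))
      (le_trans (he1 l) (Nat.le_add_right _ _)) h8).2
    omega
  have hVjl : spow (gen b) (r - 1) * spow W (j + 1)
      = spow (gen b) (r - 1) * spow W (l + 1) := by
    rw [hVe j, hVe l, hbl, hejl]
  -- powers of P := b^(r-1) * G
  have hL9 : ∀ i : ℕ, spow (spow (gen b) (r - 1) * G) (i + 2)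
      = (spow (gen b) (r - 1) * spow W (i + 1)) * G := by
    intro i
    induction i with
    | zero =>
      show (spow (gen b) (r - 1) * G) * (spow (gen b) (r - 1) * G) = _
      rw [mul_assoc, ← mul_assoc G, hG, ← mul_assoc]
      rfl
    | succ n ih =>
      have hstep : spow (spow (gen b) (r - 1) * G) (n + 1 + 2)
          = spow (spow (gen b) (r - 1) * G) (n + 2) * (spow (gen b) (r - 1) * G) := rfl
      rw [hstep, ih, mul_assoc, ← mul_assoc G, hG, ← mul_assoc,
        mul_assoc (spow (gen b) (r - 1)) (spow W (n + 1)) W,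
        ← spow_succ' W (by omega)]
  obtain ⟨cP, hcP⟩ := hcover (spow (gen b) (r - 1) * G)
  obtain ⟨w, hw1', hwP⟩ := hcP
  have hfin : spow (gen cP) (w * (j + 2)) = spow (gen cP) (w * (l + 2)) := by
    have e1 : spow (gen cP) (w * (j + 2))
        = (spow (gen b) (r - 1) * spow W (j + 1)) * G := by
      rw [← spow_spow' (gen cP) hw1' (show 1 ≤ j + 2 by omega), ← hwP, hL9 j]
    have e2 : spow (gen cP) (w * (l + 2))
        = (spow (gen b) (r - 1) * spow W (l + 1)) * G := by
      rw [← spow_spow' (gen cP) hw1' (show 1 ≤ l + 2 by omega), ← hwP, hL9 l]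
    rw [e1, e2, hVjl]
  have hje := (hfree cP cP (w * (j + 2)) (w * (l + 2))
    (Nat.mul_pos hw1' (by omega)) (Nat.mul_pos hw1' (by omega)) hfin).2
  have : j + 2 = l + 2 := Nat.eq_of_mul_eq_mul_left (by omega) hje
  exact hjl (by omega)
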